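/- arXiv:2603.06060 — 6 statements merged into one kernel-verified Lean document; each statement's English description precedes it below -/
import Mathlib

section
/- Let r ≥ 1, let x ∈ ℝ with q = f_h(x), let k = ⌊2^r·q⌋, and let R be uniformly distributed on {0, 1, …, 2^r − 1}. Then P(k + R ≥ 2^r) = k/2^r, and q − 2^{−r} < k/2^r ≤ q. Consequently the expected output of the StochasticA scheme, namely ⌊x⌋_h + h·(k/2^r), satisfies x − h·2^{−r} < ⌊x⌋_h + h·(k/2^r) ≤ x, i.e. StochasticA has a downward bias of magnitude less than h·2^{−r}. -/
open MeasureTheory ProbabilityTheory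
open scoped ENNReal

/-! Exactly `k` of the `2^r` values of `R` satisfy `k + R ≥ 2^r`, namely `R ≥ 2^r − k`. The mean
`k / 2^r` is `q` truncated to `r` binary digits, so it lies in `(q − 2^{−r}, q]`; scaling by `h` and
adding `⌊x⌋_h`, which together with `h·q` makes up `x`, turns this into the bias bound. -/

/-- Stochastic rounding to the grid `hℤ`: equal to `h·⌊x/h⌋ + h` with probability
`f_h(x) = Int.fract (x/h)` and to `h·⌊x/h⌋` with probability `1 − f_h(x)`. -/
noncomputable def srPMF (h x : ℝ) : PMF ℝ :=
  (PMF.bernoulli (Real.toNNReal (Int.fract (x / h)))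
      (Real.toNNReal_le_one.mpr (Int.fract_lt_one _).le)).map
    (fun b => if b then h * ⌊x / h⌋ + h else h * ⌊x / h⌋)

/-- A uniform random `r`-bit integer `R ∈ {0, 1, …, 2^r − 1}`. -/
noncomputable def unifBits (r : ℕ) : PMF ℕ :=
  PMF.uniformOfFinset (Finset.range (2 ^ r)) (Finset.nonempty_range_iff.mpr (by positivity))

open Finset in
theorem card_filter_range_le_add {n k : ℕ} (hk : k ≤ n) : #{R ∈ range n | n ≤ k + R} = k := by
  have hIco : {R ∈ range n | n ≤ k + R} = Ico (n - k) n := by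
    ext R
    simp only [mem_filter, mem_range, mem_Ico]
    omega
  rw [hIco, Nat.card_Ico]
  omega

theorem toMeasure_uniformOfFinset_range_carry {n : ℕ} (hn : (Finset.range n).Nonempty) {k : ℤ}
    (hk₀ : 0 ≤ k) (hkn : k ≤ n) :
    (PMF.uniformOfFinset (Finset.range n) hn).toMeasure {R | (n : ℤ) ≤ k + (R : ℤ)}
      = ENNReal.ofReal ((k : ℝ) / n) := by
  lift k to ℕ using hk₀
  have hn₀ : (0 : ℝ) < n := by exact_mod_cast (Finset.nonempty_range_iff.mp hn).bot_lt
  have hset : {R : ℕ | (n : ℤ) ≤ k + R} = {R | n ≤ k + R} := by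
    ext R
    simp only [Set.mem_ofPred_eq]
    omega
  rw [hset, PMF.toMeasure_uniformOfFinset_apply _ _ MeasurableSet.of_discrete]
  simp only [Set.mem_ofPred_eq]
  rw [card_filter_range_le_add (by exact_mod_cast hkn), Finset.card_range, Int.cast_natCast,
    ENNReal.ofReal_div_of_pos hn₀, ENNReal.ofReal_natCast, ENNReal.ofReal_natCast]

theorem floor_mul_div_le {N : ℝ} (hN : 0 < N) (q : ℝ) : (⌊N * q⌋ : ℝ) / N ≤ q := by
  rw [div_le_iff₀ hN]
  linarith [Int.floor_le (N * q)]

theorem sub_inv_lt_floor_mul_div {N : ℝ} (hN : 0 < N) (q : ℝ) : q - N⁻¹ < (⌊N * q⌋ : ℝ) / N := by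
  calc q - N⁻¹ = (N * q - 1) / N := by field_simp
    _ < ⌊N * q⌋ / N := by gcongr; linarith [Int.lt_floor_add_one (N * q)]

theorem floor_mul_fract_nonneg {N : ℝ} (hN : 0 ≤ N) (x : ℝ) : 0 ≤ ⌊N * Int.fract x⌋ :=
  Int.floor_nonneg.mpr (mul_nonneg hN (Int.fract_nonneg x))

theorem floor_mul_fract_le (N : ℕ) (x : ℝ) : ⌊(N : ℝ) * Int.fract x⌋ ≤ N := by
  have : (N : ℝ) * Int.fract x ≤ N := mul_le_of_le_one_right N.cast_nonneg (Int.fract_lt_one x).le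
  exact_mod_cast (Int.floor_mono this).trans (Int.floor_natCast N).le

theorem mul_floor_div_add_mul_fract {h : ℝ} (hh : h ≠ 0) (x : ℝ) :
    h * ⌊x / h⌋ + h * Int.fract (x / h) = x := by
  rw [← mul_add, Int.floor_add_fract, mul_div_cancel₀ x hh]

theorem stochasticA_bias_general (h x : ℝ) (hh : 0 < h) (r : ℕ) :
    (unifBits r).toMeasure {R | (2 ^ r : ℤ) ≤ ⌊(2 ^ r : ℝ) * Int.fract (x / h)⌋ + (R : ℤ)}
      = ENNReal.ofReal ((⌊(2 ^ r : ℝ) * Int.fract (x / h)⌋ : ℝ) / 2 ^ r) ∧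
    Int.fract (x / h) - ((2 : ℝ) ^ r)⁻¹
      < (⌊(2 ^ r : ℝ) * Int.fract (x / h)⌋ : ℝ) / 2 ^ r ∧
    (⌊(2 ^ r : ℝ) * Int.fract (x / h)⌋ : ℝ) / 2 ^ r ≤ Int.fract (x / h) ∧
    x - h * ((2 : ℝ) ^ r)⁻¹
      < h * ⌊x / h⌋ + h * ((⌊(2 ^ r : ℝ) * Int.fract (x / h)⌋ : ℝ) / 2 ^ r) ∧
    h * ⌊x / h⌋ + h * ((⌊(2 ^ r : ℝ) * Int.fract (x / h)⌋ : ℝ) / 2 ^ r) ≤ x := by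
  have hN : (0 : ℝ) < 2 ^ r := by positivity
  have hlo := sub_inv_lt_floor_mul_div hN (Int.fract (x / h))
  have hhi := floor_mul_div_le hN (Int.fract (x / h))
  have hx := mul_floor_div_add_mul_fract hh.ne' x
  refine ⟨?_, hlo, hhi, ?_, ?_⟩
  · exact_mod_cast toMeasure_uniformOfFinset_range_carry
      (Finset.nonempty_range_iff.mpr (by positivity))
      (floor_mul_fract_nonneg (Nat.cast_nonneg (2 ^ r)) (x / h)) (floor_mul_fract_le (2 ^ r) (x / h))
  · linarith [mul_lt_mul_of_pos_left hlo hh]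
  · linarith [mul_le_mul_of_nonneg_left hhi hh.le]

/-- IEEE P3109 StochasticA: with `q = f_h(x)`, `k = ⌊2^r·q⌋` and `R` uniform on
`{0,…,2^r−1}`, `P(k + R ≥ 2^r) = k/2^r` and `q − 2^{−r} < k/2^r ≤ q`; hence the
expected output `⌊x⌋_h + h·(k/2^r)` satisfies `x − h·2^{−r} < ⌊x⌋_h + h·(k/2^r) ≤ x`,
i.e. StochasticA has a downward bias of magnitude less than `h·2^{−r}`. -/
theorem stochasticA_bias (h x : ℝ) (hh : 0 < h) (r : ℕ) (hr : 1 ≤ r) :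
    (unifBits r).toMeasure {R | (2 ^ r : ℤ) ≤ ⌊(2 ^ r : ℝ) * Int.fract (x / h)⌋ + (R : ℤ)}
      = ENNReal.ofReal ((⌊(2 ^ r : ℝ) * Int.fract (x / h)⌋ : ℝ) / 2 ^ r) ∧
    Int.fract (x / h) - ((2 : ℝ) ^ r)⁻¹
      < (⌊(2 ^ r : ℝ) * Int.fract (x / h)⌋ : ℝ) / 2 ^ r ∧
    (⌊(2 ^ r : ℝ) * Int.fract (x / h)⌋ : ℝ) / 2 ^ r ≤ Int.fract (x / h) ∧
    x - h * ((2 : ℝ) ^ r)⁻¹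
      < h * ⌊x / h⌋ + h * ((⌊(2 ^ r : ℝ) * Int.fract (x / h)⌋ : ℝ) / 2 ^ r) ∧
    h * ⌊x / h⌋ + h * ((⌊(2 ^ r : ℝ) * Int.fract (x / h)⌋ : ℝ) / 2 ^ r) ≤ x :=
  stochasticA_bias_general h x hh r
end

section
/- Let r ≥ 1, let x ∈ ℝ with q = f_h(x), let k be a nearest integer to 2^r·q (so |k − 2^r·q| ≤ 1/2), and let R be uniformly distributed on {0, 1, …, 2^r − 1}. Then the probability that the StochasticC scheme rounds up equals min(k/2^r, 1) and satisfies |k/2^r − q| ≤ 2^{−(r+1)}; consequently the expected output differs from x by at most h·2^{−(r+1)}, i.e. StochasticC's worst-case bias is at most half that of StochasticA. -/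
lemma Finset.card_filter_range_le_add (N : ℕ) (k : ℤ)
    [DecidablePred fun R : ℕ => (N : ℤ) ≤ k + R] :
    (((Finset.range N).filter (fun R : ℕ => (N : ℤ) ≤ k + R)).card : ℤ) = max (min k N) 0 := by
  have hfilter :
      (Finset.range N).filter (fun R : ℕ => (N : ℤ) ≤ k + R) = Finset.Ico (N - k.toNat) N := by
    ext R
    simp only [Finset.mem_filter, Finset.mem_range, Finset.mem_Ico]
    omega
  rw [hfilter, Nat.card_Ico]
  omega

lemma PMF.toMeasure_uniformOfFinset_range_le_add {N : ℕ} (hN : (Finset.range N).Nonempty)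
    (k : ℤ) :
    (PMF.uniformOfFinset (Finset.range N) hN).toMeasure {R | (N : ℤ) ≤ k + R}
      = ENNReal.ofReal (min ((k : ℝ) / N) 1) := by
  have hN' : (0 : ℝ) < N := by simpa [Nat.pos_iff_ne_zero] using hN
  rw [PMF.toMeasure_uniformOfFinset_apply _ _ .of_discrete, Finset.card_range,
    ← ENNReal.ofReal_natCast, ← ENNReal.ofReal_natCast N, ← ENNReal.ofReal_div_of_pos hN']
  simp only [Set.mem_ofPred_eq]
  rw [← Int.cast_natCast, @Finset.card_filter_range_le_add N k _]
  push_cast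
  rw [← max_div_div_right hN'.le, zero_div, ← min_div_div_right hN'.le, div_self hN'.ne',
    ENNReal.ofReal_max, ENNReal.ofReal_zero, max_eq_left zero_le]

lemma Int.le_of_abs_sub_lt_one {k n : ℤ} {y : ℝ} (hk : |(k : ℝ) - y| < 1) (hy : y ≤ n) :
    k ≤ n := by
  have : (k : ℝ) < n + 1 := by linarith [(abs_lt.mp hk).2]
  exact Int.lt_add_one_iff.mp (by exact_mod_cast this)

lemma abs_div_sub_eq {N : ℝ} (hN : 0 < N) (a q : ℝ) : |a / N - q| = |a - N * q| / N := by
  rw [div_sub' hN.ne', abs_div, abs_of_pos hN, mul_comm]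

lemma mul_floor_div_add_mul_sub_eq {h : ℝ} (hh : h ≠ 0) (x p : ℝ) :
    h * ⌊x / h⌋ + h * p - x = h * (p - Int.fract (x / h)) := by
  rw [Int.fract, mul_sub, mul_sub, mul_div_cancel₀ _ hh]
  ring

theorem stochasticC_bias_general (h x : ℝ) (hh : 0 < h) (r : ℕ) (k : ℤ)
    (hk : |(k : ℝ) - 2 ^ r * Int.fract (x / h)| ≤ 1 / 2) :
    (unifBits r).toMeasure {R | (2 ^ r : ℤ) ≤ k + (R : ℤ)}
      = ENNReal.ofReal (min ((k : ℝ) / 2 ^ r) 1) ∧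
    |(k : ℝ) / 2 ^ r - Int.fract (x / h)| ≤ ((2 : ℝ) ^ (r + 1))⁻¹ ∧
    |h * ⌊x / h⌋ + h * min ((k : ℝ) / 2 ^ r) 1 - x| ≤ h * ((2 : ℝ) ^ (r + 1))⁻¹ := by
  have hk_le : k ≤ 2 ^ r := by
    refine Int.le_of_abs_sub_lt_one (by linarith) ?_
    push_cast
    exact mul_le_of_le_one_right (by positivity) (Int.fract_lt_one _).le
  have hdiff : |(k : ℝ) / 2 ^ r - Int.fract (x / h)| ≤ ((2 : ℝ) ^ (r + 1))⁻¹ := by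
    rw [abs_div_sub_eq (by positivity), div_le_iff₀ (by positivity), pow_succ', mul_inv,
      inv_mul_cancel_right₀ (by positivity), ← one_div]
    exact hk
  refine ⟨?_, hdiff, ?_⟩
  · exact_mod_cast PMF.toMeasure_uniformOfFinset_range_le_add _ k
  · have hkr : (k : ℝ) / 2 ^ r ≤ 1 := div_le_one_of_le₀ (by exact_mod_cast hk_le) (by positivity)
    rw [min_eq_left hkr, mul_floor_div_add_mul_sub_eq hh.ne', abs_mul, abs_of_pos hh]
    gcongr

/-- IEEE P3109 StochasticC: with `q = f_h(x)`, `k` a nearest integer to `2^r·q`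
(so `|k − 2^r·q| ≤ 1/2`) and `R` uniform on `{0,…,2^r−1}`, the probability of
rounding up equals `min(k/2^r, 1)` and `|k/2^r − q| ≤ 2^{−(r+1)}`; consequently
the expected output `⌊x⌋_h + h·min(k/2^r, 1)` differs from `x` by at most
`h·2^{−(r+1)}`, half the worst-case bias of StochasticA. -/
theorem stochasticC_bias (h x : ℝ) (hh : 0 < h) (r : ℕ) (hr : 1 ≤ r) (k : ℤ)
    (hk : |(k : ℝ) - 2 ^ r * Int.fract (x / h)| ≤ 1 / 2) :
    (unifBits r).toMeasure {R | (2 ^ r : ℤ) ≤ k + (R : ℤ)}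
      = ENNReal.ofReal (min ((k : ℝ) / 2 ^ r) 1) ∧
    |(k : ℝ) / 2 ^ r - Int.fract (x / h)| ≤ ((2 : ℝ) ^ (r + 1))⁻¹ ∧
    |h * ⌊x / h⌋ + h * min ((k : ℝ) / 2 ^ r) 1 - x| ≤ h * ((2 : ℝ) ^ (r + 1))⁻¹ :=
  stochasticC_bias_general h x hh r k hk
end

section
/- Let h > 0, let x_1, …, x_n be real numbers rounded element-wise by independent stochastic roundings, and let S = Σ_{i=1}^n SR_h(x_i). Then for every t > 0, P(|S − Σ_{i=1}^n x_i| ≥ t) ≤ n·h²/(4t²); in particular, for every δ ∈ (0,1), with probability at least 1 − δ the total rounding error satisfies |S − Σ x_i| ≤ (h/2)·√(n/δ), i.e. it grows like √n rather than n. -/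
open MeasureTheory ProbabilityTheory
open scoped ENNReal

/-! Each stochastic rounding `SR_h(x)` lives on the two grid points `⌊x⌋_h ≤ ⌊x⌋_h + h`, so it is
unbiased and, by Popoviciu's inequality, has variance at most `h² / 4`. Roundings of distinct
inputs are coordinates of a product measure, hence independent, so the variance of their sum is at
most `n h² / 4`, and Chebyshev's inequality gives the tail bound. Choosing `t = (h/2) √(n/δ)`
makes that bound equal to `δ`. -/

lemma ofReal_one_sub_le_measure_compl {Ω : Type*} [MeasurableSpace Ω] {μ : Measure Ω}
    [IsProbabilityMeasure μ] {s : Set Ω} {δ : ℝ} (hδ : 0 ≤ δ) (hs : μ s ≤ ENNReal.ofReal δ) :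
    ENNReal.ofReal (1 - δ) ≤ μ sᶜ := by
  calc ENNReal.ofReal (1 - δ) = 1 - ENNReal.ofReal δ := by
        rw [ENNReal.ofReal_sub _ hδ, ENNReal.ofReal_one]
    _ ≤ μ Set.univ - μ s := by rw [measure_univ]; gcongr
    _ ≤ μ sᶜ := tsub_le_iff_left.mpr (measure_univ_le_add_compl s)

lemma meas_ge_le_sum_variance_div_sq_pi {ι : Type*} [Fintype ι] {μ : ι → Measure ℝ}
    [∀ i, IsProbabilityMeasure (μ i)] (hμ : ∀ i, MemLp id 2 (μ i)) {t : ℝ} (ht : 0 < t) :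
    Measure.pi μ {ω | t ≤ |∑ i, ω i - ∑ i, ∫ y, y ∂μ i|}
      ≤ ENNReal.ofReal ((∑ i, Var[id; μ i]) / t ^ 2) := by
  have hsum : (∑ i, fun ω : ι → ℝ => id (ω i)) = fun ω => ∑ i, ω i := by
    ext ω
    simp
  have hcoord (i : ι) : MemLp (fun ω : ι → ℝ => ω i) 2 (Measure.pi μ) :=
    (hμ i).comp_measurePreserving (measurePreserving_eval _ i)
  have hS : MemLp (∑ i, fun ω : ι → ℝ => id (ω i)) 2 (Measure.pi μ) :=
    memLp_finsetSum' _ fun i _ => hcoord i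
  have hmean : ∫ ω, ∑ i, ω i ∂Measure.pi μ = ∑ i, ∫ y, y ∂μ i := by
    rw [integral_finsetSum _ fun i _ => (hcoord i).integrable one_le_two]
    exact Finset.sum_congr rfl fun i _ => integral_eval
  have hcheb := meas_ge_le_variance_div_sq hS ht
  rwa [variance_sum_pi hμ, hsum, hmean] at hcheb

lemma ae_mem_Icc_srPMF {h : ℝ} (hh : 0 ≤ h) (x : ℝ) :
    ∀ᵐ y ∂(srPMF h x).toMeasure, y ∈ Set.Icc (h * ⌊x / h⌋) (h * ⌊x / h⌋ + h) := by
  rw [srPMF, ← PMF.toMeasure_map _ _ (measurable_of_countable _)]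
  refine (ae_map_iff (measurable_of_countable _).aemeasurable measurableSet_Icc).mpr
    (ae_of_all _ fun b => ?_)
  cases b <;> simp [hh]

lemma memLp_id_srPMF {h : ℝ} (hh : 0 ≤ h) (x : ℝ) : MemLp id 2 (srPMF h x).toMeasure :=
  memLp_of_bounded (ae_mem_Icc_srPMF hh x) aestronglyMeasurable_id 2

lemma variance_id_srPMF_le {h : ℝ} (hh : 0 ≤ h) (x : ℝ) :
    Var[id; (srPMF h x).toMeasure] ≤ h ^ 2 / 4 := by
  calc Var[id; (srPMF h x).toMeasure] ≤ ((h * ⌊x / h⌋ + h - h * ⌊x / h⌋) / 2) ^ 2 :=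
        variance_le_sq_of_bounded (ae_mem_Icc_srPMF hh x) aemeasurable_id
    _ = h ^ 2 / 4 := by ring

lemma integral_id_srPMF {h : ℝ} (hh : h ≠ 0) (x : ℝ) : ∫ y, y ∂(srPMF h x).toMeasure = x := by
  rw [srPMF, ← PMF.toMeasure_map _ _ (measurable_of_countable _),
    integral_map (measurable_of_countable _).aemeasurable (f := fun y => y)
      aestronglyMeasurable_id, PMF.integral_eq_sum]
  have hfract : ((1 - (Int.fract (x / h)).toNNReal : NNReal) : ℝ) = 1 - Int.fract (x / h) := by
    rw [NNReal.coe_sub (Real.toNNReal_le_one.mpr (Int.fract_lt_one _).le), NNReal.coe_one,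
      Real.coe_toNNReal _ (Int.fract_nonneg _)]
  simp only [Fintype.sum_bool, PMF.bernoulli_apply, cond_true, cond_false, ite_true,
    Bool.false_eq_true, ite_false, ENNReal.coe_toReal, hfract,
    Real.coe_toNNReal _ (Int.fract_nonneg _), smul_eq_mul]
  rw [← Int.self_sub_floor]
  field_simp
  ring

lemma measure_pi_srPMF_abs_sum_sub_ge_le {ι : Type*} [Fintype ι] {h : ℝ} (hh : 0 < h)
    (x : ι → ℝ) {t : ℝ} (ht : 0 < t) :
    (Measure.pi fun i => (srPMF h (x i)).toMeasure) {ω | t ≤ |∑ i, ω i - ∑ i, x i|}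
      ≤ ENNReal.ofReal (Fintype.card ι * h ^ 2 / (4 * t ^ 2)) := by
  calc (Measure.pi fun i => (srPMF h (x i)).toMeasure) {ω | t ≤ |∑ i, ω i - ∑ i, x i|}
      = (Measure.pi fun i => (srPMF h (x i)).toMeasure)
          {ω | t ≤ |∑ i, ω i - ∑ i, ∫ y, y ∂(srPMF h (x i)).toMeasure|} := by
        simp_rw [integral_id_srPMF hh.ne']
    _ ≤ ENNReal.ofReal ((∑ i, Var[id; (srPMF h (x i)).toMeasure]) / t ^ 2) :=
        meas_ge_le_sum_variance_div_sq_pi (fun i => memLp_id_srPMF hh.le _) ht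
    _ ≤ ENNReal.ofReal ((∑ _i : ι, h ^ 2 / 4) / t ^ 2) := by
        gcongr with i
        exact variance_id_srPMF_le hh.le _
    _ = ENNReal.ofReal (Fintype.card ι * h ^ 2 / (4 * t ^ 2)) := by
        rw [Finset.sum_const, Finset.card_univ, nsmul_eq_mul]
        ring_nf

/-- Bienaymé–Chebyshev bound for element-wise independent stochastic rounding:
`P(|S − Σ x_i| ≥ t) ≤ n·h²/(4t²)` for every `t > 0`; in particular, for
`δ ∈ (0,1)`, with probability at least `1 − δ`, `|S − Σ x_i| ≤ (h/2)·√(n/δ)`. -/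
theorem sr_sum_chebyshev (h : ℝ) (hh : 0 < h) (n : ℕ) (x : Fin n → ℝ) :
    (∀ t : ℝ, 0 < t →
      (Measure.pi fun i => (srPMF h (x i)).toMeasure)
          {ω | t ≤ |(∑ i, ω i) - ∑ i, x i|}
        ≤ ENNReal.ofReal (n * h ^ 2 / (4 * t ^ 2))) ∧
    ∀ δ : ℝ, δ ∈ Set.Ioo (0 : ℝ) 1 →
      ENNReal.ofReal (1 - δ) ≤
        (Measure.pi fun i => (srPMF h (x i)).toMeasure)
          {ω | |(∑ i, ω i) - ∑ i, x i| ≤ h / 2 * Real.sqrt (n / δ)} := by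
  have tail (t : ℝ) (ht : 0 < t) :=
    Fintype.card_fin n ▸ measure_pi_srPMF_abs_sum_sub_ge_le hh x ht
  refine ⟨tail, fun δ ⟨hδ0, _⟩ => ?_⟩
  rcases n.eq_zero_or_pos with rfl | hn
  · simp [hδ0.le]
  set t := h / 2 * √(n / δ)
  have hnδ : (0 : ℝ) < n / δ := div_pos (Nat.cast_pos.mpr hn) hδ0
  have hδt : n * h ^ 2 / (4 * t ^ 2) = δ := by
    rw [mul_pow, Real.sq_sqrt hnδ.le]
    field_simp
    norm_num
  calc ENNReal.ofReal (1 - δ) ≤ (Measure.pi fun i => (srPMF h (x i)).toMeasure)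
        {ω | t ≤ |(∑ i, ω i) - ∑ i, x i|}ᶜ :=
        ofReal_one_sub_le_measure_compl hδ0.le (hδt ▸ tail t (by positivity))
    _ ≤ _ := measure_mono fun _ hω => (not_le.mp (Set.notMem_ofPred_iff.mp hω)).le
end

section
/- Let h > 0, let x_1, …, x_n be real numbers rounded element-wise by independent stochastic roundings, and let ε_i = SR_h(x_i) − x_i. Each ε_i has mean zero and lies almost surely in the interval [⌊x_i⌋_h − x_i, ⌊x_i⌋_h + h − x_i] of length h; therefore, by Hoeffding's inequality, for every t > 0, P(|Σ_{i=1}^n ε_i| ≥ t) ≤ 2·exp(−2t²/(n·h²)). -/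
open MeasureTheory ProbabilityTheory
open scoped ENNReal

/-! Each rounding error `SR_h(x) − x` is centred, since `h·f_h(x) = x − ⌊x⌋_h`, and takes values
in an interval of length `h`; by Hoeffding's lemma it is sub-Gaussian with variance proxy `h²/4`.
The errors are coordinates of a product measure, hence independent, so their sum is sub-Gaussian
with proxy `n·h²/4`, and the Chernoff bound applied to both tails gives the estimate. -/

namespace ProbabilityTheory

lemma HasSubgaussianMGF.measure_abs_sum_ge_le_of_iIndepFun {Ω ι : Type*}
    {mΩ : MeasurableSpace Ω} {μ : Measure Ω} [IsFiniteMeasure μ] {X : ι → Ω → ℝ}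
    (h_indep : iIndepFun X μ) {c : ι → NNReal} {s : Finset ι}
    (h_subG : ∀ i ∈ s, HasSubgaussianMGF (X i) (c i) μ) {ε : ℝ} (hε : 0 ≤ ε) :
    μ.real {ω | ε ≤ |∑ i ∈ s, X i ω|} ≤ 2 * Real.exp (-ε ^ 2 / (2 * ∑ i ∈ s, c i)) := by
  have h_indep_neg : iIndepFun (fun i => -X i) μ :=
    h_indep.comp (fun _ => Neg.neg) (fun _ => measurable_neg)
  have h_upper := measure_sum_ge_le_of_iIndepFun h_indep h_subG hε
  have h_lower := measure_sum_ge_le_of_iIndepFun h_indep_neg (fun i hi => (h_subG i hi).neg) hε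
  have h_split : {ω | ε ≤ |∑ i ∈ s, X i ω|}
      ⊆ {ω | ε ≤ ∑ i ∈ s, X i ω} ∪ {ω | ε ≤ ∑ i ∈ s, (-X i) ω} := by
    intro ω hω
    simpa [Finset.sum_neg_distrib, le_abs] using hω
  calc μ.real {ω | ε ≤ |∑ i ∈ s, X i ω|}
      ≤ μ.real {ω | ε ≤ ∑ i ∈ s, X i ω} + μ.real {ω | ε ≤ ∑ i ∈ s, (-X i) ω} :=
        (measureReal_mono h_split).trans (measureReal_union_le _ _)
    _ ≤ 2 * Real.exp (-ε ^ 2 / (2 * ∑ i ∈ s, c i)) := by linarith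

lemma measure_abs_sum_ge_le_of_iIndepFun_of_mem_Icc {Ω ι : Type*} [Fintype ι]
    {mΩ : MeasurableSpace Ω} {μ : Measure Ω} [IsProbabilityMeasure μ] {X : ι → Ω → ℝ}
    (h_indep : iIndepFun X μ) (h_meas : ∀ i, AEMeasurable (X i) μ) {a b : ι → ℝ} {h : ℝ}
    (h_Icc : ∀ i, ∀ᵐ ω ∂μ, X i ω ∈ Set.Icc (a i) (b i)) (h_width : ∀ i, b i - a i = h)
    (h_mean : ∀ i, μ[X i] = 0) {t : ℝ} (ht : 0 ≤ t) :
    μ.real {ω | t ≤ |∑ i, X i ω|} ≤ 2 * Real.exp (-2 * t ^ 2 / (Fintype.card ι * h ^ 2)) := by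
  have h_subG (i : ι) : HasSubgaussianMGF (X i) ((‖h‖₊ / 2) ^ 2) μ := by
    simpa only [h_width] using
      hasSubgaussianMGF_of_mem_Icc_of_integral_eq_zero (h_meas i) (h_Icc i) (h_mean i)
  have h_exponent : -t ^ 2 / (2 * ((∑ _i : ι, (‖h‖₊ / 2) ^ 2 : NNReal) : ℝ))
      = -2 * t ^ 2 / (Fintype.card ι * h ^ 2) := by
    simp only [Finset.sum_const, Finset.card_univ, nsmul_eq_mul]
    push_cast
    rw [Real.norm_eq_abs, div_pow, sq_abs]
    ring
  rw [← h_exponent]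
  exact HasSubgaussianMGF.measure_abs_sum_ge_le_of_iIndepFun h_indep (fun i _ => h_subG i) ht

end ProbabilityTheory

lemma integral_sub_srPMF (x : ℝ) {h : ℝ} (hh : h ≠ 0) :
    ∫ y, (y - x) ∂(srPMF h x).toMeasure = 0 :=
  calc ∫ y, (y - x) ∂(srPMF h x).toMeasure
      = Int.fract (x / h) * (h * ⌊x / h⌋ + h - x)
          + (1 - Int.fract (x / h)) * (h * ⌊x / h⌋ - x) := by
        rw [srPMF, ← PMF.toMeasure_map _ _ measurable_from_top,
          integral_map measurable_from_top.aemeasurable (by fun_prop), PMF.integral_eq_sum]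
        simp [PMF.bernoulli_apply, Int.fract_nonneg, (Int.fract_lt_one _).le]
    _ = 0 := by
        rw [Int.fract]
        field_simp
        ring

lemma ae_srPMF_mem_Icc (x : ℝ) {h : ℝ} (hh : 0 ≤ h) :
    ∀ᵐ y ∂(srPMF h x).toMeasure, y ∈ Set.Icc (h * ⌊x / h⌋) (h * ⌊x / h⌋ + h) := by
  rw [srPMF, ← PMF.toMeasure_map _ _ measurable_from_top]
  refine (ae_map_iff measurable_from_top.aemeasurable measurableSet_Icc).2 (ae_of_all _ ?_)
  rintro (_ | _) <;> simp [hh]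

/-- Hoeffding bound for element-wise independent stochastic rounding: the errors
`ε_i = SR_h(x_i) − x_i` have mean zero, lie almost surely in the length-`h`
interval `[⌊x_i⌋_h − x_i, ⌊x_i⌋_h + h − x_i]`, and for every `t > 0`,
`P(|Σ ε_i| ≥ t) ≤ 2·exp(−2t²/(n·h²))`. -/
theorem sr_sum_hoeffding (h : ℝ) (hh : 0 < h) (n : ℕ) (x : Fin n → ℝ) :
    (∀ i, (∫ ω, (ω i - x i) ∂(Measure.pi fun j => (srPMF h (x j)).toMeasure)) = 0) ∧
    (∀ i, (Measure.pi fun j => (srPMF h (x j)).toMeasure)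
        {ω | ω i - x i ∈ Set.Icc (h * ⌊x i / h⌋ - x i) (h * ⌊x i / h⌋ + h - x i)} = 1) ∧
    ∀ t : ℝ, 0 < t →
      (Measure.pi fun j => (srPMF h (x j)).toMeasure)
          {ω | t ≤ |∑ i, (ω i - x i)|}
        ≤ ENNReal.ofReal (2 * Real.exp (-2 * t ^ 2 / (n * h ^ 2))) := by
  set ν : Fin n → Measure ℝ := fun j => (srPMF h (x j)).toMeasure
  have h_meas (i : Fin n) : Measurable fun ω : Fin n → ℝ => ω i - x i :=
    (measurable_pi_apply i).sub_const _
  have h_mean (i : Fin n) : ∫ ω, (ω i - x i) ∂Measure.pi ν = 0 := by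
    rw [integral_comp_eval (μ := ν) (f := fun y : ℝ => y - x i) (by fun_prop)]
    exact integral_sub_srPMF (x i) hh.ne'
  have h_Icc (i : Fin n) : ∀ᵐ ω ∂Measure.pi ν,
      ω i - x i ∈ Set.Icc (h * ⌊x i / h⌋ - x i) (h * ⌊x i / h⌋ + h - x i) := by
    filter_upwards [(measurePreserving_eval ν i).quasiMeasurePreserving.ae
      (ae_srPMF_mem_Icc (x i) hh.le)] with ω hω
    exact ⟨sub_le_sub_right hω.1 _, sub_le_sub_right hω.2 _⟩
  have h_indep : iIndepFun (fun i (ω : Fin n → ℝ) => ω i - x i) (Measure.pi ν) :=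
    iIndepFun_pi fun i => (measurable_sub_const (x i)).aemeasurable
  refine ⟨h_mean, fun i => ?_, fun t ht => ?_⟩
  · rw [← measure_univ (μ := Measure.pi ν)]
    exact (ae_iff_measure_eq (measurableSet_Icc.preimage (h_meas i)).nullMeasurableSet).1
      (h_Icc i)
  have h_tail := measure_abs_sum_ge_le_of_iIndepFun_of_mem_Icc h_indep
    (fun i => (h_meas i).aemeasurable) h_Icc (fun i => by ring) h_mean ht.le
  rw [Fintype.card_fin] at h_tail
  exact (ENNReal.le_ofReal_iff_toReal_le (measure_ne_top _ _) (by positivity)).2 h_tail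
end

section
/- Let h > 0 and let x_1, …, x_n be real numbers summed recursively under stochastic rounding: S_0 = 0 and S_k = SR_h(S_{k−1} + x_k) with fresh independent randomness at each step. Then, since conditionally on S_{k−1} each step has conditional mean S_{k−1} + x_k and conditional variance at most h²/4, the total variance satisfies Var(S_n) ≤ n·h²/4. -/
open MeasureTheory ProbabilityTheory
open scoped ENNReal

/-- The law of recursive summation under stochastic rounding with fresh
independent randomness at each step: `S_0 = 0` and the law of
`S_k = SR_h(S_{k−1} + x_k)` is the monadic bind of the law of `S_{k−1}` with the
kernel `s ↦ SR_h(s + x_k)`. -/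
noncomputable def recSumPMF (h : ℝ) (l : List ℝ) : PMF ℝ :=
  l.foldl (fun p x => p.bind fun s => srPMF h (s + x)) (PMF.pure 0)

/-!
By the law of total variance, `Var S_k = E[Var(S_k | S_{k-1})] + Var(E[S_k | S_{k-1}])`.
Stochastic rounding is unbiased, so the second term is `Var(S_{k-1} + x_k) = Var S_{k-1}`;
a rounding takes values in an interval of length `h`, so by Popoviciu's inequality the first
term is at most `h²/4`. All laws involved have finite support, so every integral is a finite sum.
-/

namespace PMF

variable {α β : Type*}

lemma support_bind_finite {p : PMF α} {k : α → PMF β} (hp : p.support.Finite)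
    (hk : ∀ a, (k a).support.Finite) : (p.bind k).support.Finite :=
  p.support_bind k ▸ hp.biUnion fun a _ => hk a

variable [MeasurableSpace α] [MeasurableSingletonClass α]
  [MeasurableSpace β] [MeasurableSingletonClass β]

lemma ae_mem_support (p : PMF α) : ∀ᵐ a ∂p.toMeasure, a ∈ p.support :=
  p.restrict_toMeasure_support ▸ ae_restrict_mem p.support_countable.measurableSet

lemma integrable_of_support_finite {p : PMF α} (hp : p.support.Finite) (g : α → ℝ) :
    Integrable g p.toMeasure := by
  rw [← p.restrict_toMeasure_support, ← Set.biUnion_of_singleton p.support]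
  exact (integrableOn_finite_biUnion hp).2 fun a _ =>
    (integrableOn_singleton_iff enorm_ne_top).mpr (Or.inr (measure_lt_top _ _))

lemma integral_eq_sum_of_support_subset {p : PMF α} {s : Finset α} (hs : p.support ⊆ s)
    (g : α → ℝ) : ∫ a, g a ∂p.toMeasure = ∑ a ∈ s, (p a).toReal * g a := by
  rw [p.integral_eq_tsum g (integrable_of_support_finite (s.finite_toSet.subset hs) g),
    tsum_eq_sum fun a ha => by rw [(p.apply_eq_zero_iff a).2 fun h => ha (hs h)]; simp]
  rfl

lemma integral_bind_of_support_finite {p : PMF α} {k : α → PMF β} (hp : p.support.Finite)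
    (hk : ∀ a, (k a).support.Finite) (g : β → ℝ) :
    ∫ b, g b ∂(p.bind k).toMeasure = ∫ a, ∫ b, g b ∂(k a).toMeasure ∂p.toMeasure := by
  classical
  set T := hp.toFinset
  set U := T.biUnion fun a => (hk a).toFinset
  have hkU : ∀ a ∈ T, (k a).support ⊆ U := fun a ha b hb =>
    Finset.mem_biUnion.2 ⟨a, ha, (hk a).mem_toFinset.2 hb⟩
  have hbind : ∀ b, (p.bind k b).toReal = ∑ a ∈ T, (p a).toReal * (k a b).toReal := by
    intro b
    rw [p.bind_apply, tsum_eq_sum (s := T) fun a ha => by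
        rw [(p.apply_eq_zero_iff a).2 fun h => ha (hp.mem_toFinset.2 h), zero_mul],
      ENNReal.toReal_sum fun a _ => ENNReal.mul_ne_top (p.apply_ne_top a) ((k a).apply_ne_top b)]
    simp only [ENNReal.toReal_mul]
  rw [integral_eq_sum_of_support_subset (s := U) (by
      rw [p.support_bind k]; exact Set.iUnion₂_subset fun a ha => hkU a (hp.mem_toFinset.2 ha)) g,
    integral_eq_sum_of_support_subset (s := T) (by simp [T])]
  simp_rw [hbind, Finset.sum_mul]
  rw [Finset.sum_comm]
  refine Finset.sum_congr rfl fun a ha => ?_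
  rw [integral_eq_sum_of_support_subset (hkU a ha), Finset.mul_sum]
  simp only [mul_assoc]

lemma variance_eq_integral_sq_sub {p : PMF α} (hp : p.support.Finite) (X : α → ℝ) :
    variance X p.toMeasure = ∫ a, X a ^ 2 ∂p.toMeasure - (∫ a, X a ∂p.toMeasure) ^ 2 :=
  variance_eq_sub <| (memLp_two_iff_integrable_sq
    (integrable_of_support_finite hp X).aestronglyMeasurable).2 (integrable_of_support_finite hp _)

lemma variance_bind {p : PMF α} {k : α → PMF ℝ} (hp : p.support.Finite)
    (hk : ∀ a, (k a).support.Finite) :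
    variance id (p.bind k).toMeasure = ∫ a, variance id (k a).toMeasure ∂p.toMeasure +
      variance (fun a => ∫ y, y ∂(k a).toMeasure) p.toMeasure := by
  have hsq : ∀ a, ∫ y, y ^ 2 ∂(k a).toMeasure =
      variance id (k a).toMeasure + (∫ y, y ∂(k a).toMeasure) ^ 2 := fun a => by
    rw [variance_eq_integral_sq_sub (hk a)]; simp
  rw [variance_eq_integral_sq_sub (support_bind_finite hp hk), variance_eq_integral_sq_sub hp]
  simp only [id_eq, integral_bind_of_support_finite hp hk, hsq]
  rw [integral_add (integrable_of_support_finite hp _) (integrable_of_support_finite hp _)]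
  ring

end PMF

lemma support_srPMF_finite (h x : ℝ) : (srPMF h x).support.Finite := by
  rw [srPMF, PMF.support_map]
  exact (Set.toFinite _).image _

lemma support_srPMF_subset_Icc {h : ℝ} (hh : 0 ≤ h) (x : ℝ) :
    (srPMF h x).support ⊆ Set.Icc (h * ⌊x / h⌋) (h * ⌊x / h⌋ + h) := by
  rw [srPMF, PMF.support_map]
  rintro _ ⟨b, -, rfl⟩
  cases b <;> simp [hh]

lemma variance_srPMF_le {h : ℝ} (hh : 0 ≤ h) (x : ℝ) :
    variance id (srPMF h x).toMeasure ≤ h ^ 2 / 4 :=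
  calc variance id (srPMF h x).toMeasure ≤ ((h * ⌊x / h⌋ + h - h * ⌊x / h⌋) / 2) ^ 2 :=
        variance_le_sq_of_bounded
          ((srPMF h x).ae_mem_support.mono fun _ hy => support_srPMF_subset_Icc hh x hy)
          aemeasurable_id
    _ = h ^ 2 / 4 := by ring

lemma recSumPMF_append (h x : ℝ) (l : List ℝ) :
    recSumPMF h (l ++ [x]) = (recSumPMF h l).bind fun s => srPMF h (s + x) := by
  rw [recSumPMF, List.foldl_append]
  rfl

lemma support_recSumPMF_finite (h : ℝ) (l : List ℝ) : (recSumPMF h l).support.Finite := by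
  induction l using List.reverseRecOn with
  | nil => exact (PMF.support_pure (0 : ℝ)).symm ▸ Set.finite_singleton 0
  | append_singleton l x ih =>
    exact recSumPMF_append h x l ▸ PMF.support_bind_finite ih fun _ => support_srPMF_finite _ _

lemma variance_recSumPMF_append_le {h : ℝ} (hh : 0 < h) (l : List ℝ) (x : ℝ) :
    variance id (recSumPMF h (l ++ [x])).toMeasure ≤
      variance id (recSumPMF h l).toMeasure + h ^ 2 / 4 := by
  have hfin := support_recSumPMF_finite h l
  rw [recSumPMF_append, PMF.variance_bind hfin fun _ => support_srPMF_finite _ _]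
  simp only [integral_id_srPMF hh.ne']
  have hvar : ∫ a, variance id (srPMF h (a + x)).toMeasure ∂(recSumPMF h l).toMeasure ≤
      h ^ 2 / 4 := by
    calc _ ≤ ∫ _, h ^ 2 / 4 ∂(recSumPMF h l).toMeasure :=
          integral_mono (PMF.integrable_of_support_finite hfin _) (integrable_const _)
            fun a => variance_srPMF_le hh.le _
      _ = h ^ 2 / 4 := by simp
  have hshift : variance (fun a => a + x) (recSumPMF h l).toMeasure =
      variance id (recSumPMF h l).toMeasure :=
    variance_add_const aestronglyMeasurable_id x
  linarith

/-- Recursive summation under stochastic rounding, each step having conditional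
variance at most `h²/4`, satisfies `Var(S_n) ≤ n·h²/4`. -/
theorem recursive_sum_variance (h : ℝ) (hh : 0 < h) (l : List ℝ) :
    variance id (recSumPMF h l).toMeasure ≤ l.length * h ^ 2 / 4 := by
  induction l using List.reverseRecOn with
  | nil => simp [recSumPMF, PMF.toMeasure_pure, variance_dirac]
  | append_singleton l x ih =>
    calc variance id (recSumPMF h (l ++ [x])).toMeasure
        ≤ variance id (recSumPMF h l).toMeasure + h ^ 2 / 4 := variance_recSumPMF_append_le hh l x
      _ ≤ (l ++ [x]).length * h ^ 2 / 4 := by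
        rw [List.length_append, List.length_singleton, Nat.cast_add, Nat.cast_one]
        linarith
end

section
/- Let h > 0 and let x_1, …, x_n be real numbers summed recursively under stochastic rounding: S_0 = 0 and S_k = SR_h(S_{k−1} + x_k) with fresh independent randomness at each step. Then for every t > 0, P(|S_n − (x_1 + ⋯ + x_n)| ≥ t) ≤ n·h²/(4t²); in particular, for every δ ∈ (0,1), with probability at least 1 − δ the error of recursive summation under stochastic rounding is at most (h/2)·√(n/δ), i.e. it grows like √n with high probability. -/
/-!
Each rounding step is unbiased and, conditionally on the past, has variance
`h² f (1 - f) ≤ h² / 4`. Hence the second moment of `S_k - (x_1 + ⋯ + x_k)` grows by at most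
`h² / 4` per step, so it is at most `n h² / 4`, and Chebyshev's inequality gives the tail bound;
the radius `(h / 2) √(n / δ)` is where that bound equals `δ`.
-/

open MeasureTheory ProbabilityTheory
open scoped ENNReal

namespace PMF

variable {α β : Type*} [MeasurableSpace β]

theorem toMeasure_bind (p : PMF α) (κ : α → PMF β) :
    (p.bind κ).toMeasure = Measure.sum fun a => p a • (κ a).toMeasure := by
  ext s hs
  simp [hs, Measure.sum_apply _ hs]

theorem lintegral_eq_tsum [MeasurableSpace α] [MeasurableSingletonClass α] (p : PMF α)
    (g : α → ℝ≥0∞) :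
    ∫⁻ a, g a ∂p.toMeasure = ∑' a, p a * g a := by
  conv_lhs => rw [← p.bind_pure, toMeasure_bind]
  simp [lintegral_sum_measure, toMeasure_pure, lintegral_dirac]

theorem lintegral_bind [MeasurableSpace α] [MeasurableSingletonClass α] (p : PMF α)
    (κ : α → PMF β) (g : β → ℝ≥0∞) :
    ∫⁻ b, g b ∂(p.bind κ).toMeasure
      = ∫⁻ a, ∫⁻ b, g b ∂(κ a).toMeasure ∂p.toMeasure := by
  simp [toMeasure_bind, lintegral_sum_measure, lintegral_eq_tsum]

end PMF

theorem lintegral_srPMF (h x : ℝ) (g : ℝ → ℝ≥0∞) :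
    ∫⁻ z, g z ∂(srPMF h x).toMeasure =
      ENNReal.ofReal (Int.fract (x / h)) * g (h * ⌊x / h⌋ + h)
        + ENNReal.ofReal (1 - Int.fract (x / h)) * g (h * ⌊x / h⌋) := by
  rw [srPMF, ← PMF.bind_pure_comp, PMF.lintegral_bind, PMF.lintegral_eq_tsum, tsum_bool]
  rw [ENNReal.ofReal_sub _ (Int.fract_nonneg _), ENNReal.ofReal_one]
  simp [PMF.toMeasure_pure, lintegral_dirac, PMF.bernoulli, ENNReal.ofReal, add_comm]

theorem lintegral_srPMF_sq_sub_le {h : ℝ} (hh : h ≠ 0) (x c : ℝ) :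
    ∫⁻ z, ENNReal.ofReal ((z - c) ^ 2) ∂(srPMF h x).toMeasure
      ≤ ENNReal.ofReal ((x - c) ^ 2 + h ^ 2 / 4) := by
  rw [lintegral_srPMF]
  set f := Int.fract (x / h)
  set a := h * ⌊x / h⌋
  have hf0 : 0 ≤ f := Int.fract_nonneg _
  have hf1 : 0 ≤ 1 - f := sub_nonneg.2 (Int.fract_lt_one _).le
  have hx : x = a + h * f := by
    rw [← mul_add, Int.floor_add_fract, mul_div_cancel₀ _ hh]
  rw [← ENNReal.ofReal_mul hf0, ← ENNReal.ofReal_mul hf1,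
    ← ENNReal.ofReal_add (by positivity) (by positivity)]
  refine ENNReal.ofReal_le_ofReal ?_
  -- `h² / 4 - (h * (2 * f - 1)) ^ 2 / 4 = h² f (1 - f)` is the variance of a single rounding
  have hvar : f * (a + h - c) ^ 2 + (1 - f) * (a - c) ^ 2
      = (x - c) ^ 2 + h ^ 2 / 4 - (h * (2 * f - 1)) ^ 2 / 4 := by
    rw [hx]; ring
  linarith [sq_nonneg (h * (2 * f - 1))]

theorem recSumPMF_nil (h : ℝ) : recSumPMF h [] = PMF.pure 0 := rfl

theorem recSumPMF_append_singleton (h : ℝ) (l : List ℝ) (x : ℝ) :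
    recSumPMF h (l ++ [x]) = (recSumPMF h l).bind fun s => srPMF h (s + x) := by
  simp [recSumPMF, List.foldl_append]

theorem lintegral_recSumPMF_sq_sub_sum_le {h : ℝ} (hh : h ≠ 0) (l : List ℝ) :
    ∫⁻ z, ENNReal.ofReal ((z - l.sum) ^ 2) ∂(recSumPMF h l).toMeasure
      ≤ ENNReal.ofReal (l.length * h ^ 2 / 4) := by
  induction l using List.reverseRecOn with
  | nil => simp [recSumPMF_nil, PMF.toMeasure_pure, lintegral_dirac]
  | append_singleton l x ih =>
    calc ∫⁻ z, ENNReal.ofReal ((z - (l ++ [x]).sum) ^ 2) ∂(recSumPMF h (l ++ [x])).toMeasure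
        = ∫⁻ s, ∫⁻ z, ENNReal.ofReal ((z - (l.sum + x)) ^ 2) ∂(srPMF h (s + x)).toMeasure
            ∂(recSumPMF h l).toMeasure := by
          rw [recSumPMF_append_singleton, PMF.lintegral_bind, List.sum_append, List.sum_singleton]
      _ ≤ ∫⁻ s, ENNReal.ofReal ((s - l.sum) ^ 2) + ENNReal.ofReal (h ^ 2 / 4)
            ∂(recSumPMF h l).toMeasure := by
          refine lintegral_mono fun s => (lintegral_srPMF_sq_sub_le hh _ _).trans_eq ?_
          rw [ENNReal.ofReal_add (sq_nonneg _) (by positivity)]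
          ring_nf
      _ = ∫⁻ s, ENNReal.ofReal ((s - l.sum) ^ 2) ∂(recSumPMF h l).toMeasure
            + ENNReal.ofReal (h ^ 2 / 4) := by
          rw [lintegral_add_right _ measurable_const, lintegral_const, measure_univ, mul_one]
      _ ≤ ENNReal.ofReal (l.length * h ^ 2 / 4) + ENNReal.ofReal (h ^ 2 / 4) := by
          gcongr
      _ = ENNReal.ofReal ((l ++ [x]).length * h ^ 2 / 4) := by
          rw [← ENNReal.ofReal_add (by positivity) (by positivity)]
          push_cast [List.length_append, List.length_singleton]
          ring_nf

theorem measure_le_abs_sub_le_lintegral_div (μ : Measure ℝ) (m : ℝ) {t : ℝ} (ht : 0 < t) :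
    μ {z | t ≤ |z - m|}
      ≤ (∫⁻ z, ENNReal.ofReal ((z - m) ^ 2) ∂μ) / ENNReal.ofReal (t ^ 2) := by
  have hsub :
      {z | t ≤ |z - m|} ⊆ {z | ENNReal.ofReal (t ^ 2) ≤ ENNReal.ofReal ((z - m) ^ 2)} :=
    fun z hz => ENNReal.ofReal_le_ofReal (sq_abs (z - m) ▸ pow_le_pow_left₀ ht.le hz 2)
  refine (measure_mono hsub).trans
    (meas_ge_le_lintegral_div (by fun_prop) ?_ ENNReal.ofReal_ne_top)
  positivity

theorem recSumPMF_tail_le {h : ℝ} (hh : h ≠ 0) (l : List ℝ) {t : ℝ} (ht : 0 < t) :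
    (recSumPMF h l).toMeasure {z | t ≤ |z - l.sum|}
      ≤ ENNReal.ofReal (l.length * h ^ 2 / (4 * t ^ 2)) :=
  calc (recSumPMF h l).toMeasure {z | t ≤ |z - l.sum|}
      ≤ (∫⁻ z, ENNReal.ofReal ((z - l.sum) ^ 2) ∂(recSumPMF h l).toMeasure)
          / ENNReal.ofReal (t ^ 2) := measure_le_abs_sub_le_lintegral_div _ _ ht
    _ ≤ ENNReal.ofReal (l.length * h ^ 2 / 4) / ENNReal.ofReal (t ^ 2) := by
      gcongr; exact lintegral_recSumPMF_sq_sub_sum_le hh l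
    _ = ENNReal.ofReal (l.length * h ^ 2 / (4 * t ^ 2)) := by
      rw [← ENNReal.ofReal_div_of_pos (by positivity), div_div]

theorem ofReal_one_sub_le_measure_abs_sub_le (μ : Measure ℝ) [IsProbabilityMeasure μ]
    {m t δ : ℝ} (hδ : 0 ≤ δ) (htail : μ {z | t ≤ |z - m|} ≤ ENNReal.ofReal δ) :
    ENNReal.ofReal (1 - δ) ≤ μ {z | |z - m| ≤ t} :=
  calc ENNReal.ofReal (1 - δ) = 1 - ENNReal.ofReal δ := by
        rw [ENNReal.ofReal_sub _ hδ, ENNReal.ofReal_one]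
    _ ≤ 1 - μ {z | t ≤ |z - m|} := tsub_le_tsub_left htail 1
    _ = μ {z | t ≤ |z - m|}ᶜ :=
        (prob_compl_eq_one_sub (measurableSet_le (by fun_prop) (by fun_prop))).symm
    _ ≤ μ {z | |z - m| ≤ t} := measure_mono fun z (hz : ¬t ≤ |z - m|) => (not_le.1 hz).le

/-- Chebyshev bound for recursive summation under stochastic rounding:
`P(|S_n − Σ x_i| ≥ t) ≤ n·h²/(4t²)` for all `t > 0`; in particular, for
`δ ∈ (0,1)`, with probability at least `1 − δ` the error is at most
`(h/2)·√(n/δ)`, growing like `√n`. -/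
theorem recursive_sum_chebyshev (h : ℝ) (hh : 0 < h) (l : List ℝ) :
    (∀ t : ℝ, 0 < t →
      (recSumPMF h l).toMeasure {z | t ≤ |z - l.sum|}
        ≤ ENNReal.ofReal (l.length * h ^ 2 / (4 * t ^ 2))) ∧
    ∀ δ : ℝ, δ ∈ Set.Ioo (0 : ℝ) 1 →
      ENNReal.ofReal (1 - δ) ≤
        (recSumPMF h l).toMeasure
          {z | |z - l.sum| ≤ h / 2 * Real.sqrt (l.length / δ)} := by
  refine ⟨fun t ht => recSumPMF_tail_le hh.ne' l ht, fun δ hδ => ?_⟩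
  obtain ⟨hδ0, -⟩ := hδ
  rcases Nat.eq_zero_or_pos l.length with hn | hn
  -- here the radius is `0`, but `S_0 = 0` exactly
  · simp [List.length_eq_zero_iff.1 hn, recSumPMF_nil, PMF.toMeasure_pure, hδ0.le]
  have hnδ : (0 : ℝ) < l.length / δ := div_pos (by exact_mod_cast hn) hδ0
  refine ofReal_one_sub_le_measure_abs_sub_le _ hδ0.le
    ((recSumPMF_tail_le hh.ne' l (by positivity)).trans_eq (congrArg _ ?_))
  rw [mul_pow, Real.sq_sqrt hnδ.le]
  field_simp
  norm_num
end
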